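/- arXiv:1102.2836 — 4 statements merged into one kernel-verified Lean document; each statement's English description precedes it below -/
import Mathlib

section
/- Suppose a sequence x_1,...,x_L with predictions ŷ_1,...,ŷ_L satisfies: x is a threshold sequence at level x ≤ 1/2, meaning x_t = 1 whenever ŷ_t < x and x_t = 0 whenever ŷ_t ≥ x. Then the regret relative to the constant x satisfies (1/L)∑[(x_t-ŷ_t)^2 - (x_t-x)^2] ≥ (2x/L)∑|x - ŷ_t|. Consequently, if the regret relative to the empirical mean is at most R, then at least half of the indices t satisfy |ŷ_t - x| ≤ R/x. -/
/-!
Pointwise, `(b - y)² - (b - x)² = 2 (x - y) (b - x) + (x - y)²`, and a threshold label `b` lies on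
the far side of `x` from the prediction `y`, at distance at least `x`
(`1 - x ≥ x` as `x ≤ 1/2`), so `(x - y) (b - x) ≥ x |x - y|`; summing gives the first bound.
Since the empirical mean minimises the square loss, the regret against the mean dominates the
regret against `x`, hence `2 ∑ |y_t - x| ≤ (R / x) L`, and Markov's inequality leaves at most
`L / 2` indices with `|y_t - x| > R / x`.
-/

open Finset

namespace Finset

variable {ι : Type*} (s : Finset ι) (f : ι → ℝ)

theorem sum_sq_sub_mean_le (c : ℝ) :
    ∑ i ∈ s, (f i - (∑ j ∈ s, f j) / #s) ^ 2 ≤ ∑ i ∈ s, (f i - c) ^ 2 := by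
  set m := (∑ j ∈ s, f j) / #s
  have centered : ∑ i ∈ s, (f i - m) = 0 := by
    rcases s.eq_empty_or_nonempty with rfl | hs
    · simp
    · rw [sum_sub_distrib, sum_const, nsmul_eq_mul, mul_div_cancel₀ _ (by positivity), sub_self]
  have expand : ∑ i ∈ s, (f i - c) ^ 2
      = ∑ i ∈ s, (f i - m) ^ 2 + 2 * (m - c) * ∑ i ∈ s, (f i - m) + ∑ _i ∈ s, (m - c) ^ 2 := by
    rw [mul_sum, ← sum_add_distrib, ← sum_add_distrib]
    exact sum_congr rfl fun i _ => by ring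
  rw [expand, centered, mul_zero, add_zero, le_add_iff_nonneg_right]
  exact sum_nonneg fun _ _ => sq_nonneg _

theorem card_le_two_mul_card_filter_le {c : ℝ} (hc : 0 ≤ c) (hf : ∀ i ∈ s, 0 ≤ f i)
    (hsum : 2 * ∑ i ∈ s, f i ≤ c * #s) : #s ≤ 2 * #{i ∈ s | f i ≤ c} := by
  by_contra! hlt
  set bad := {i ∈ s | ¬ f i ≤ c}
  have hcard : #{i ∈ s | f i ≤ c} + #bad = #s := card_filter_add_card_filter_not _
  have hbad : bad.Nonempty := card_pos.mp (by omega)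
  have markov : c * #bad < ∑ i ∈ bad, f i := by
    simpa [mul_comm] using sum_lt_sum_of_nonempty hbad fun i hi => not_le.mp (mem_filter.mp hi).2
  have hsub : ∑ i ∈ bad, f i ≤ ∑ i ∈ s, f i :=
    sum_le_sum_of_subset_of_nonneg (filter_subset _ _) fun i hi _ => hf i hi
  have hhalf : (#s : ℝ) ≤ 2 * #bad := by exact_mod_cast (by omega : #s ≤ 2 * #bad)
  nlinarith [mul_le_mul_of_nonneg_left hhalf hc]

end Finset

theorem two_mul_mul_le_sq_sub_sq (b x y : ℝ) :
    2 * ((x - y) * (b - x)) ≤ (b - y) ^ 2 - (b - x) ^ 2 := by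
  nlinarith [sq_nonneg (x - y)]

theorem mul_abs_sub_le_mul_of_threshold {x y b : ℝ} (hx : x ≤ 1 / 2)
    (hbelow : y < x → b = 1) (habove : x ≤ y → b = 0) :
    x * |x - y| ≤ (x - y) * (b - x) := by
  rcases lt_or_ge y x with hyx | hxy
  · rw [hbelow hyx, abs_of_pos (sub_pos.mpr hyx)]
    nlinarith
  · rw [habove hxy, abs_of_nonpos (sub_nonpos.mpr hxy)]
    linarith

theorem threshold_sequence_concentration_general (L : ℕ) (hL : 1 ≤ L) (x : ℝ)
    (hx : 0 < x) (hx2 : x ≤ 1 / 2) (xs ys : Fin L → ℝ)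
    (hthr : ∀ t, (ys t < x → xs t = 1) ∧ (x ≤ ys t → xs t = 0)) :
    ((1 / L) * ∑ t, ((xs t - ys t) ^ 2 - (xs t - x) ^ 2)
        ≥ (2 * x / L) * ∑ t, |x - ys t|)
    ∧ (∀ R : ℝ,
        (1 / L) * ∑ t, (xs t - ys t) ^ 2
            - (1 / L) * ∑ t, (xs t - (∑ s, xs s) / L) ^ 2 ≤ R →
        L ≤ 2 * (Finset.univ.filter (fun t => |ys t - x| ≤ R / x)).card) := by
  have hL0 : (0 : ℝ) < L := by exact_mod_cast hL
  have regret_const : (2 * x / L) * ∑ t, |x - ys t|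
      ≤ (1 / L) * ∑ t, ((xs t - ys t) ^ 2 - (xs t - x) ^ 2) := by
    calc (2 * x / L) * ∑ t, |x - ys t| = (1 / L) * ∑ t, 2 * (x * |x - ys t|) := by
          rw [← mul_sum, ← mul_sum]; ring
      _ ≤ _ := by
          gcongr with t
          exact (mul_le_mul_of_nonneg_left
            (mul_abs_sub_le_mul_of_threshold hx2 (hthr t).1 (hthr t).2) two_pos.le).trans
            (two_mul_mul_le_sq_sub_sq (xs t) x (ys t))
  refine ⟨regret_const, fun R hregret => ?_⟩
  have mean_le : ∑ t, (xs t - (∑ s, xs s) / L) ^ 2 ≤ ∑ t, (xs t - x) ^ 2 := by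
    simpa using sum_sq_sub_mean_le univ xs x
  have regret_bound : (2 * x / L) * ∑ t, |ys t - x| ≤ R := by
    rw [sum_sub_distrib, mul_sub] at regret_const
    simp only [abs_sub_comm x] at regret_const
    linarith [mul_le_mul_of_nonneg_left mean_le (one_div_pos.mpr hL0).le]
  have hR : 0 ≤ R := le_trans (by positivity) regret_bound
  have hsum : 2 * ∑ t, |ys t - x| ≤ R / x * #(univ : Finset (Fin L)) := by
    rw [card_univ, Fintype.card_fin, div_mul_eq_mul_div, le_div_iff₀ hx]
    rw [div_mul_eq_mul_div, div_le_iff₀ hL0] at regret_bound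
    linarith
  simpa using card_le_two_mul_card_filter_le univ (fun t => |ys t - x|) (div_nonneg hR hx.le)
    (fun t _ => abs_nonneg _) hsum

/-- Threshold sequence at level x ≤ 1/2: the regret relative to the constant x is at
least (2x/L)∑|x−ŷₜ|; consequently if the regret relative to the empirical mean is at
most R then at least half the predictions are within R/x of x. -/
theorem threshold_sequence_concentration (L : ℕ) (hL : 1 ≤ L) (x : ℝ)
    (hx : 0 < x) (hx2 : x ≤ 1 / 2) (xs ys : Fin L → ℝ)
    (hxs : ∀ t, xs t = 0 ∨ xs t = 1) (hys : ∀ t, ys t ∈ Set.Icc (0 : ℝ) 1)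
    (hthr : ∀ t, (ys t < x → xs t = 1) ∧ (x ≤ ys t → xs t = 0)) :
    ((1 / L) * ∑ t, ((xs t - ys t) ^ 2 - (xs t - x) ^ 2)
        ≥ (2 * x / L) * ∑ t, |x - ys t|)
    ∧ (∀ R : ℝ,
        (1 / L) * ∑ t, (xs t - ys t) ^ 2
            - (1 / L) * ∑ t, (xs t - (∑ s, xs s) / L) ^ 2 ≤ R →
        L ≤ 2 * (Finset.univ.filter (fun t => |ys t - x| ≤ R / x)).card) :=
  threshold_sequence_concentration_general L hL x hx hx2 xs ys hthr
end

section
/- Regret decomposition into quantization and spacing losses: let ŷ_1,...,ŷ_L be predictions and x_t = ŷ_t + (P_t Δ + δ_t)α for integers P_t with ∑ P_t = 0, reals δ_t, and constants Δ, α > 0. Then the regret R = (1/L)∑(x_t-ŷ_t)^2 - (1/L)∑(x_t-x̄)^2 satisfies R ≤ (1/L)∑ δ_t^2 α^2 − (2Δα/L)∑ P_t ŷ_t, where x̄ is the empirical mean of the x_t. -/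
/-!
Write `x t = z t + P t Δ α` with `z t = y t + δ t α`. Since `∑ P = 0`, `x` and `z` have the
same mean, so expanding the empirical variance of `x` gives
`L R = ∑ (y² - 2 x y) + (∑ z)² / L`, and Cauchy–Schwarz `(∑ z)² ≤ L ∑ z²` bounds this by
`∑ (y² - 2 x y + z²) = ∑ ((z - y)² - 2 (x - z) y) = ∑ (δ² α² - 2 Δ α P y)`.
-/

open Finset

namespace Finset

variable {ι : Type*} (s : Finset ι) (f : ι → ℝ)

theorem sum_sub_mean_sq :
    ∑ i ∈ s, (f i - (∑ j ∈ s, f j) / #s) ^ 2 = ∑ i ∈ s, f i ^ 2 - (∑ i ∈ s, f i) ^ 2 / #s := by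
  obtain rfl | hs := s.eq_empty_or_nonempty
  · simp
  have hcard : (#s : ℝ) ≠ 0 := by exact_mod_cast hs.card_pos.ne'
  simp only [sub_sq, sum_add_distrib, sum_sub_distrib, sum_const, nsmul_eq_mul, ← sum_mul,
    ← mul_sum]
  field_simp
  ring

theorem sq_sum_div_card_le_sum_sq : (∑ i ∈ s, f i) ^ 2 / #s ≤ ∑ i ∈ s, f i ^ 2 := by
  obtain rfl | hs := s.eq_empty_or_nonempty
  · simp
  rw [div_le_iff₀' (by exact_mod_cast hs.card_pos)]
  exact sq_sum_le_card_mul_sum_sq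

theorem sum_sq_sub_sub_sum_sub_mean_sq_le (g : ι → ℝ) {h : ι → ℝ} (hfh : ∑ i ∈ s, f i = ∑ i ∈ s, h i) :
    ∑ i ∈ s, (f i - g i) ^ 2 - ∑ i ∈ s, (f i - (∑ j ∈ s, f j) / #s) ^ 2
      ≤ ∑ i ∈ s, ((h i - g i) ^ 2 - 2 * (f i - h i) * g i) := by
  have hJensen := sq_sum_div_card_le_sum_sq s h
  have hexpand : ∑ i ∈ s, ((h i - g i) ^ 2 - 2 * (f i - h i) * g i)
      = ∑ i ∈ s, (f i - g i) ^ 2 - ∑ i ∈ s, f i ^ 2 + ∑ i ∈ s, h i ^ 2 := by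
    rw [← sum_sub_distrib, ← sum_add_distrib]
    exact sum_congr rfl fun i _ => by ring
  rw [sum_sub_mean_sq, hexpand, hfh]
  linarith

end Finset

theorem regret_quantization_spacing_general (L : ℕ) (y δ : Fin L → ℝ)
    (P : Fin L → ℤ) (hP : ∑ t, P t = 0) (Δ α : ℝ)
    (x : Fin L → ℝ) (hx : ∀ t, x t = y t + ((P t : ℝ) * Δ + δ t) * α) :
    (1 / L) * ∑ t, (x t - y t) ^ 2 - (1 / L) * ∑ t, (x t - (∑ s, x s) / L) ^ 2
      ≤ (1 / L) * ∑ t, (δ t) ^ 2 * α ^ 2 - (2 * Δ * α / L) * ∑ t, (P t : ℝ) * y t := by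
  have hmean : ∑ t, x t = ∑ t, (y t + δ t * α) := by
    have hPℝ : ∑ t, (P t : ℝ) = 0 := by exact_mod_cast hP
    simp only [hx, add_mul, sum_add_distrib, mul_assoc, ← sum_mul, hPℝ, zero_mul, zero_add]
  have hterm : ∀ t, (y t + δ t * α - y t) ^ 2 - 2 * (x t - (y t + δ t * α)) * y t
      = δ t ^ 2 * α ^ 2 - 2 * Δ * α * ((P t : ℝ) * y t) := fun t => by rw [hx]; ring
  have key := sum_sq_sub_sub_sum_sub_mean_sq_le univ x y hmean
  simp only [hterm, sum_sub_distrib, ← mul_sum, card_univ, Fintype.card_fin] at key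
  calc _ = (1 / L) * (∑ t, (x t - y t) ^ 2 - ∑ t, (x t - (∑ s, x s) / L) ^ 2) := by ring
    _ ≤ (1 / L) * (∑ t, δ t ^ 2 * α ^ 2 - 2 * Δ * α * ∑ t, (P t : ℝ) * y t) := by gcongr
    _ = _ := by ring

/-- Regret decomposition into quantization and spacing losses. -/
theorem regret_quantization_spacing (L : ℕ) (hL : 1 ≤ L) (y δ : Fin L → ℝ)
    (P : Fin L → ℤ) (hP : ∑ t, P t = 0) (Δ α : ℝ) (hΔ : 0 < Δ) (hα : 0 < α)
    (x : Fin L → ℝ) (hx : ∀ t, x t = y t + ((P t : ℝ) * Δ + δ t) * α) :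
    (1 / L) * ∑ t, (x t - y t) ^ 2 - (1 / L) * ∑ t, (x t - (∑ s, x s) / L) ^ 2
      ≤ (1 / L) * ∑ t, (δ t) ^ 2 * α ^ 2 - (2 * Δ * α / L) * ∑ t, (P t : ℝ) * y t :=
  regret_quantization_spacing_general L y δ P hP Δ α x hx
end

section
/- Lower bound on DTM regret: if √R < 1/6 then max{1 − √(R + 1/4), 2 + √R − 2√(R + √R + 1/2)} > 1/2; consequently no DTM machine (which requires its pivot state S_1 ≤ 1/2 to satisfy S_1 ≥ both of these expressions) can achieve maximal regret below (1/6)^2. -/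
/-- If √R < 1/6 then max{1 − √(R+1/4), 2 + √R − 2√(R+√R+1/2)} > 1/2, so no pivot
state S₁ ≤ 1/2 can dominate both expressions: no DTM machine attains regret below (1/6)². -/
theorem dtm_regret_lower_bound (R : ℝ) (hR : 0 < R) (h : Real.sqrt R < 1 / 6) :
    max (1 - Real.sqrt (R + 1 / 4))
        (2 + Real.sqrt R - 2 * Real.sqrt (R + Real.sqrt R + 1 / 2)) > 1 / 2
    ∧ ¬ ∃ S₁ : ℝ, S₁ ≤ 1 / 2 ∧ 1 - Real.sqrt (R + 1 / 4) ≤ S₁ ∧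
        2 + Real.sqrt R - 2 * Real.sqrt (R + Real.sqrt R + 1 / 2) ≤ S₁ := by
  set s := Real.sqrt R with hs
  have hs0 : 0 ≤ s := Real.sqrt_nonneg R
  have hRs : R = s ^ 2 := (Real.sq_sqrt hR.le).symm
  have key : Real.sqrt (R + s + 1 / 2) < (3 / 2 + s) / 2 := by
    have hlt : R + s + 1 / 2 < ((3 / 2 + s) / 2) ^ 2 := by
      rw [hRs]; nlinarith [sq_nonneg s, sq_nonneg (s - 1/6)]
    have := Real.sqrt_lt_sqrt (by positivity) hlt
    rwa [Real.sqrt_sq (by positivity)] at this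
  have key2 : (1:ℝ) / 2 < 2 + s - 2 * Real.sqrt (R + s + 1 / 2) := by linarith
  refine ⟨lt_of_lt_of_le key2 (le_max_right _ _), ?_⟩
  rintro ⟨S₁, hS, _, h2⟩
  linarith
end

section
/- Asymptotic regret of the EDM worst-case minimal circle: for integer k ≥ 2 and m ≥ 2, with Δ > 0, the cycle regret formula R = Δ^2·(k^{4/3}/4 + m(m−1)k^{2/3} − m(m−1)/3) holds for the sequence described, and choosing m = ⌊(k^{-2/3}/2)/Δ⌋ with Δ = (1−2k^{-1/3})/(k−1) gives R ≥ (1/2)k^{-2/3} + c·k^{-1} for some constant c and all sufficiently large k. -/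
/-!
Pair the sample at position `2i` with the one at `2i + 1`: with the sample mean
`s + (m - 1)Δ + Δ k^{2/3} / 2`, each pair contributes a quadratic polynomial in `i` to the
regret sum, and the sums of `1, i, i²` give the closed form. For the bound put `u = k^{-1/3}`,
so `k^{2/3} = u⁻²`; the EDM spacing `Δ = (1 - 2u) u³ / (1 - u³)` lies between `(1 - 2u) u³` and
`2u³`, and `mΔ` lies within `Δ` of `u² / 2`. Hence the three terms of the closed form are
`u²/4 - O(u³)`, `u²/4 - O(u³)` and `O(u³)`.
-/

open Finset in
/-- The regret of the explicit worst-case minimal circle of the k-state EDM machine: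
m−1 up-steps of m states interlaced with down-steps of m−1 states, with samples at the
edges of the transition regions. -/
noncomputable def edmCycleRegret (k m : ℕ) (Δ s : ℝ) : ℝ :=
  let L : ℝ := 2 * (m : ℝ) - 1
  let pred : ℕ → ℝ := fun j =>
    if j % 2 = 0 then s + ((j / 2 : ℕ) : ℝ) * Δ
    else s + ((m : ℝ) + ((j / 2 : ℕ) : ℝ)) * Δ
  let samp : ℕ → ℝ := fun j =>
    pred j + (if j % 2 = 0 ∧ j ≠ 2 * m - 2 then (m : ℝ) + 1 / 2
              else -((m : ℝ) - 3 / 2)) * Δ * (k : ℝ) ^ ((2 : ℝ) / 3)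
  let xbar : ℝ := (∑ j ∈ range (2 * m - 1), samp j) / L
  (∑ j ∈ range (2 * m - 1), ((samp j - pred j) ^ 2 - (samp j - xbar) ^ 2)) / L

open Finset

theorem sum_range_two_mul_add_one {M : Type*} [AddCommMonoid M] (f : ℕ → M) (t : ℕ) :
    ∑ j ∈ range (2 * t + 1), f j = ∑ i ∈ range t, (f (2 * i) + f (2 * i + 1)) + f (2 * t) := by
  induction t with
  | zero => simp
  | succ t ih =>
    rw [show 2 * (t + 1) + 1 = 2 * t + 1 + 1 + 1 by ring, sum_range_succ, sum_range_succ, ih,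
      sum_range_succ, show 2 * t + 1 + 1 = 2 * (t + 1) by ring]
    abel

theorem sum_range_quadratic {K : Type*} [Field K] [CharZero K] (a b c : K) (t : ℕ) :
    ∑ i ∈ range t, (a + b * i + c * i ^ 2)
      = t * a + b * (t * (t - 1) / 2) + c * (t * (t - 1) * (2 * t - 1) / 6) := by
  induction t with
  | zero => simp
  | succ t ih => rw [sum_range_succ, ih]; push_cast; ring

-- The prediction `ŷ` and sample `x` sequences bound by `let` in `edmCycleRegret`.
noncomputable def edmPred (m : ℕ) (Δ s : ℝ) (j : ℕ) : ℝ :=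
  if j % 2 = 0 then s + ((j / 2 : ℕ) : ℝ) * Δ
  else s + ((m : ℝ) + ((j / 2 : ℕ) : ℝ)) * Δ

noncomputable def edmSample (k m : ℕ) (Δ s : ℝ) (j : ℕ) : ℝ :=
  edmPred m Δ s j + (if j % 2 = 0 ∧ j ≠ 2 * m - 2 then (m : ℝ) + 1 / 2
              else -((m : ℝ) - 3 / 2)) * Δ * (k : ℝ) ^ ((2 : ℝ) / 3)

theorem edmCycleRegret_def (k m : ℕ) (Δ s : ℝ) :
    edmCycleRegret k m Δ s =
      (∑ j ∈ range (2 * m - 1), ((edmSample k m Δ s j - edmPred m Δ s j) ^ 2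
        - (edmSample k m Δ s j
            - (∑ j ∈ range (2 * m - 1), edmSample k m Δ s j) / (2 * (m : ℝ) - 1)) ^ 2))
        / (2 * (m : ℝ) - 1) := rfl

section Cycle

variable (k : ℕ) {m : ℕ} (Δ s : ℝ)

theorem edmPred_two_mul (i : ℕ) : edmPred m Δ s (2 * i) = s + i * Δ := by
  simp [edmPred]

theorem edmPred_two_mul_add_one (i : ℕ) : edmPred m Δ s (2 * i + 1) = s + (m + i) * Δ := by
  simp [edmPred, Nat.mul_add_div]

theorem edmSample_two_mul {t i : ℕ} (hi : i < t) :
    edmSample k (t + 1) Δ s (2 * i)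
      = s + i * Δ + (t + 3 / 2) * Δ * (k : ℝ) ^ ((2 : ℝ) / 3) := by
  rw [edmSample, edmPred_two_mul, if_pos ⟨by omega, by omega⟩]
  push_cast; ring

theorem edmSample_two_mul_self (t : ℕ) :
    edmSample k (t + 1) Δ s (2 * t)
      = s + t * Δ - (t - 1 / 2) * Δ * (k : ℝ) ^ ((2 : ℝ) / 3) := by
  rw [edmSample, edmPred_two_mul, if_neg (by omega)]
  push_cast; ring

theorem edmSample_two_mul_add_one (t i : ℕ) :
    edmSample k (t + 1) Δ s (2 * i + 1)
      = s + (t + 1 + i) * Δ - (t - 1 / 2) * Δ * (k : ℝ) ^ ((2 : ℝ) / 3) := by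
  rw [edmSample, edmPred_two_mul_add_one, if_neg (by omega)]
  push_cast; ring

theorem sum_edmSample (t : ℕ) :
    ∑ j ∈ range (2 * t + 1), edmSample k (t + 1) Δ s j
      = (2 * t + 1) * (s + t * Δ + Δ * (k : ℝ) ^ ((2 : ℝ) / 3) / 2) := by
  set K := (k : ℝ) ^ ((2 : ℝ) / 3)
  have pair : ∀ i ∈ range t,
      edmSample k (t + 1) Δ s (2 * i) + edmSample k (t + 1) Δ s (2 * i + 1)
        = (2 * s + (t + 1) * Δ + 2 * Δ * K) + 2 * Δ * i + 0 * i ^ 2 := by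
    intro i hi
    rw [edmSample_two_mul k Δ s (mem_range.1 hi), edmSample_two_mul_add_one]
    ring
  rw [sum_range_two_mul_add_one, sum_congr rfl pair, sum_range_quadratic,
    edmSample_two_mul_self]
  ring

theorem edmCycleRegret_eq (hm : 1 ≤ m) :
    edmCycleRegret k m Δ s
      = Δ ^ 2 * ((k : ℝ) ^ ((4 : ℝ) / 3) / 4
          + (m : ℝ) * ((m : ℝ) - 1) * (k : ℝ) ^ ((2 : ℝ) / 3)
          - (m : ℝ) * ((m : ℝ) - 1) / 3) := by
  obtain ⟨t, rfl⟩ : ∃ t, m = t + 1 := ⟨m - 1, by omega⟩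
  set K := (k : ℝ) ^ ((2 : ℝ) / 3)
  have hK : (k : ℝ) ^ ((4 : ℝ) / 3) = K ^ 2 := by
    rw [← Real.rpow_mul_natCast (Nat.cast_nonneg k)]; norm_num
  have hL : 2 * ((t + 1 : ℕ) : ℝ) - 1 = 2 * t + 1 := by push_cast; ring
  have hL0 : (2 * t + 1 : ℝ) ≠ 0 := by positivity
  have hmean : (∑ j ∈ range (2 * t + 1), edmSample k (t + 1) Δ s j) / (2 * t + 1)
      = s + t * Δ + Δ * K / 2 := by
    rw [sum_edmSample k Δ s, mul_div_cancel_left₀ _ hL0]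
  have pair : ∀ i ∈ range t,
      ((edmSample k (t + 1) Δ s (2 * i) - edmPred (t + 1) Δ s (2 * i)) ^ 2
        - (edmSample k (t + 1) Δ s (2 * i) - (s + t * Δ + Δ * K / 2)) ^ 2)
      + ((edmSample k (t + 1) Δ s (2 * i + 1) - edmPred (t + 1) Δ s (2 * i + 1)) ^ 2
        - (edmSample k (t + 1) Δ s (2 * i + 1) - (s + t * Δ + Δ * K / 2)) ^ 2)
      = Δ ^ 2 * (3 / 2 * K ^ 2 + 2 * ((t + 1) ^ 2 - 1) * K - t ^ 2 - 1)
        + 2 * Δ ^ 2 * (t - 1 - K) * i + (-2 * Δ ^ 2) * i ^ 2 := by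
    intro i hi
    rw [edmSample_two_mul k Δ s (mem_range.1 hi), edmSample_two_mul_add_one, edmPred_two_mul,
      edmPred_two_mul_add_one]
    push_cast; ring
  rw [edmCycleRegret_def, show 2 * (t + 1) - 1 = 2 * t + 1 by omega, hL, hmean,
    sum_range_two_mul_add_one, sum_congr rfl pair, sum_range_quadratic, edmSample_two_mul_self,
    edmPred_two_mul, div_eq_iff hL0, hK]
  push_cast; ring

end Cycle

theorem rpow_neg_one_third_pow_three {x : ℝ} (hx : 0 ≤ x) :
    (x ^ (-(1 : ℝ) / 3)) ^ 3 = x ^ (-(1 : ℝ)) := by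
  rw [← Real.rpow_mul_natCast hx]; norm_num

theorem rpow_neg_one_third_sq {x : ℝ} (hx : 0 ≤ x) :
    (x ^ (-(1 : ℝ) / 3)) ^ 2 = x ^ (-(2 : ℝ) / 3) := by
  rw [← Real.rpow_mul_natCast hx]; norm_num

theorem rpow_neg_one_third_sq_mul_rpow_two_thirds {x : ℝ} (hx : 0 < x) :
    (x ^ (-(1 : ℝ) / 3)) ^ 2 * x ^ ((2 : ℝ) / 3) = 1 := by
  rw [rpow_neg_one_third_sq hx.le, ← Real.rpow_add hx]; norm_num

theorem rpow_four_thirds {x : ℝ} (hx : 0 ≤ x) : x ^ ((4 : ℝ) / 3) = (x ^ ((2 : ℝ) / 3)) ^ 2 := by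
  rw [← Real.rpow_mul_natCast hx]; norm_num

theorem edmSpacing_mem_Icc {x u : ℝ} (hx : 1 < x) (hu : 0 < u) (hu2 : u ≤ 1 / 2)
    (hux : u ^ 3 * x = 1) :
    (1 - 2 * u) / (x - 1) ∈ Set.Icc ((1 - 2 * u) * u ^ 3) (2 * u ^ 3) := by
  have hx1 : 0 < x - 1 := by linarith
  constructor
  · rw [le_div_iff₀ hx1]; nlinarith [pow_pos hu 3]
  · rw [div_le_iff₀ hx1]; nlinarith [pow_le_pow_left₀ hu.le hu2 3]

theorem floor_div_mul_mem_Icc {a d : ℝ} (ha : 0 ≤ a) (hd : 0 < d) :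
    ⌊a / d⌋₊ * d ∈ Set.Icc (a - d) a := by
  constructor
  · have := Nat.lt_floor_add_one (a / d)
    rw [div_lt_iff₀ hd] at this
    linarith
  · exact (le_div_iff₀ hd).1 (Nat.floor_le (div_nonneg ha hd.le))

theorem regret_formula_lower_bound {u P Δ : ℝ} {m : ℕ} (hu : 0 < u) (hu8 : u ≤ 1 / 8)
    (hP : u ^ 2 * P = 1) (hΔlo : (1 - 2 * u) * u ^ 3 ≤ Δ) (hΔhi : Δ ≤ 2 * u ^ 3)
    (hmlo : u ^ 2 / 2 - Δ ≤ m * Δ) (hmhi : m * Δ ≤ u ^ 2 / 2) :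
    u ^ 2 / 2 - 5 * u ^ 3 ≤ Δ ^ 2 * (P ^ 2 / 4 + m * (m - 1) * P - m * (m - 1) / 3) := by
  have hu3 : 0 < u ^ 3 := pow_pos hu 3
  have hΔ : 0 < Δ := lt_of_lt_of_le (by nlinarith) hΔlo
  have hP0 : 0 < P := by nlinarith [sq_nonneg u]
  have hm1lo : u ^ 2 / 2 - 2 * Δ ≤ (m - 1) * Δ := by linarith
  have hm1hi : (m - 1) * Δ ≤ u ^ 2 / 2 := by linarith
  have hm1 : 0 ≤ u ^ 2 / 2 - 2 * Δ := by nlinarith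
  have diagonal : u ^ 2 / 4 - u ^ 3 ≤ Δ ^ 2 * P ^ 2 / 4 := by
    have hΔP : (1 - 2 * u) * u ≤ Δ * P := by
      calc (1 - 2 * u) * u = (1 - 2 * u) * u ^ 3 * P := by
            linear_combination -(1 - 2 * u) * u * hP
        _ ≤ Δ * P := mul_le_mul_of_nonneg_right hΔlo hP0.le
    nlinarith [mul_self_le_mul_self (by nlinarith) hΔP]
  have cross : u ^ 2 / 4 - 3 * u ^ 3 ≤ Δ ^ 2 * (m * (m - 1)) * P := by
    have hprod : (u ^ 2 / 2 - Δ) * (u ^ 2 / 2 - 2 * Δ) ≤ (m * Δ) * ((m - 1) * Δ) :=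
      mul_le_mul hmlo hm1lo hm1 (by linarith)
    nlinarith [mul_le_mul_of_nonneg_right hprod hP0.le]
  have correction : Δ ^ 2 * (m * (m - 1)) ≤ u ^ 3 / 4 := by
    have hprod : (m * Δ) * ((m - 1) * Δ) ≤ (u ^ 2 / 2) * (u ^ 2 / 2) :=
      mul_le_mul hmhi hm1hi (by linarith) (by positivity)
    nlinarith
  nlinarith

/-- The cycle regret equals Δ²(k^{4/3}/4 + m(m−1)k^{2/3} − m(m−1)/3), and with the EDM
spacing Δ = (1−2k^{−1/3})/(k−1) and m = ⌊(k^{−2/3}/2)/Δ⌋ the regret is at least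
(1/2)k^{−2/3} + c·k^{−1} for some constant c and all sufficiently large k. -/
theorem edm_cycle_regret_lower_bound :
    (∀ (k m : ℕ) (Δ s : ℝ), 2 ≤ k → 2 ≤ m → 0 < Δ →
      edmCycleRegret k m Δ s
        = Δ ^ 2 * ((k : ℝ) ^ ((4 : ℝ) / 3) / 4
            + (m : ℝ) * ((m : ℝ) - 1) * (k : ℝ) ^ ((2 : ℝ) / 3)
            - (m : ℝ) * ((m : ℝ) - 1) / 3))
    ∧ ∃ c : ℝ, ∃ K : ℕ, ∀ k : ℕ, K ≤ k → ∀ s : ℝ,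
        edmCycleRegret k
            ⌊((k : ℝ) ^ (-(2 : ℝ) / 3) / 2)
              / ((1 - 2 * (k : ℝ) ^ (-(1 : ℝ) / 3)) / ((k : ℝ) - 1))⌋₊
            ((1 - 2 * (k : ℝ) ^ (-(1 : ℝ) / 3)) / ((k : ℝ) - 1)) s
          ≥ (1 / 2) * (k : ℝ) ^ (-(2 : ℝ) / 3) + c * (k : ℝ) ^ (-(1 : ℝ)) := by
  refine ⟨fun k m Δ s _ hm _ => edmCycleRegret_eq k Δ s (by omega), -5, 512, fun k hk s => ?_⟩
  have hk : (512 : ℝ) ≤ k := by exact_mod_cast hk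
  have hk0 : (0 : ℝ) < k := by linarith
  set u := (k : ℝ) ^ (-(1 : ℝ) / 3) with hu_def
  have hu : 0 < u := Real.rpow_pos_of_pos hk0 _
  have hux : u ^ 3 * k = 1 := by
    rw [rpow_neg_one_third_pow_three hk0.le, Real.rpow_neg_one, inv_mul_cancel₀ hk0.ne']
  have hu8 : u ≤ 1 / 8 := by
    refine (pow_le_pow_iff_left₀ hu.le (by norm_num) three_ne_zero).1 ?_
    nlinarith
  set Δ := (1 - 2 * u) / ((k : ℝ) - 1)
  obtain ⟨hΔlo, hΔhi⟩ := edmSpacing_mem_Icc (by linarith) hu (by linarith) hux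
  have hΔ : 0 < Δ := lt_of_lt_of_le (by nlinarith [pow_pos hu 3]) hΔlo
  rw [← rpow_neg_one_third_sq hk0.le]
  obtain ⟨hmlo, hmhi⟩ := floor_div_mul_mem_Icc (by positivity : 0 ≤ u ^ 2 / 2) hΔ
  have hm : 1 ≤ ⌊u ^ 2 / 2 / Δ⌋₊ := Nat.le_floor (by rw [Nat.cast_one, one_le_div hΔ]; nlinarith)
  rw [edmCycleRegret_eq k Δ s hm, rpow_four_thirds hk0.le,
    ← rpow_neg_one_third_pow_three hk0.le, ← hu_def]
  linarith [regret_formula_lower_bound hu hu8 (rpow_neg_one_third_sq_mul_rpow_two_thirds hk0)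
    hΔlo hΔhi hmlo hmhi]
end
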